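/- For integral λ ≥ 0, the Lie algebra cohomology of sl₂(C) with coefficients in the tensor product V_{-λ-2} ⊗ V*_{-λ-2} of the Verma-type irreducible module with lowest/highest weight -λ-2 and its twisted dual vanishes in all degrees: Hⁿ(sl₂; V_{-λ-2} ⊗ V*_{-λ-2}) = 0 for all n. -/

import Mathlib

/- STATEMENT 17: For integral λ ≥ 0, the Lie algebra cohomology of sl₂(ℂ)
   with coefficients in V_{-λ-2} ⊗ V*_{-λ-2} vanishes in all degrees.
   Here V_μ (μ = -λ-2) is the irreducible highest weight module of highest
   weight μ (the irreducible Verma module, realized on ℂ[β] with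
   e·βⁿ = n(μ-n+1)β^{n-1}, h·βⁿ = (μ-2n)βⁿ, f·βⁿ = β^{n+1}), V*_μ is its
   ω-twisted restricted dual (⟨g·v',v⟩ = -⟨v', ω(g)v⟩, ω(e) = -f, ω(h) = -h,
   ω(f) = -e), and the cohomology is computed by the Chevalley–Eilenberg
   complex of sl₂, which for the basis e,h,f takes the form
   0 → M → M³ → M³ → M → 0. -/

noncomputable section

/-- the tensor product V_μ ⊗ V*_μ, with basis βⁿ ⊗ v'_m -/
abbrev TMod : Type := (ℕ × ℕ) →₀ ℂ

def opOf (b : ℕ × ℕ → TMod) : Module.End ℂ TMod :=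
  Finsupp.lsum ℂ fun p => LinearMap.toSpanSingleton ℂ TMod (b p)

/-- the action of e on V_μ ⊗ V*_μ : e = e⊗1 + 1⊗e, where e·βⁿ = n(μ-n+1)β^{n-1}
on V_μ and e·v'_m = v'_{m-1} on the twisted dual. -/
def Ehat (μ : ℂ) : Module.End ℂ TMod :=
  opOf fun p =>
    ((p.1 : ℂ) * (μ - (p.1 : ℂ) + 1)) • Finsupp.single (p.1 - 1, p.2) 1 +
      (if p.2 = 0 then 0 else Finsupp.single (p.1, p.2 - 1) 1)

/-- the action of h : h·βⁿ = (μ-2n)βⁿ, h·v'_m = (μ-2m)v'_m. -/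
def Hhat (μ : ℂ) : Module.End ℂ TMod :=
  opOf fun p =>
    ((μ - 2 * (p.1 : ℂ)) + (μ - 2 * (p.2 : ℂ))) • Finsupp.single p 1

/-- the action of f : f·βⁿ = β^{n+1}, f·v'_m = (m+1)(μ-m)v'_{m+1}. -/
def Fhat (μ : ℂ) : Module.End ℂ TMod :=
  opOf fun p =>
    Finsupp.single (p.1 + 1, p.2) 1 +
      (((p.2 : ℂ) + 1) * (μ - (p.2 : ℂ))) • Finsupp.single (p.1, p.2 + 1) 1

namespace Aux17

lemma opOf_single (b : ℕ × ℕ → TMod) (p : ℕ × ℕ) (r : ℂ) :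
    opOf b (Finsupp.single p r) = r • b p := by simp [opOf]

lemma Ehat_single (μ : ℂ) (n m : ℕ) (r : ℂ) :
    Ehat μ (Finsupp.single (n, m) r) =
      (r * ((n : ℂ) * (μ - n + 1))) • Finsupp.single (n - 1, m) 1 +
        (if m = 0 then 0 else r • Finsupp.single (n, m - 1) 1) := by
  rw [Ehat, opOf_single]
  split_ifs <;> simp only [smul_add, smul_smul, smul_zero, add_zero]

lemma Hhat_single (μ : ℂ) (n m : ℕ) (r : ℂ) :
    Hhat μ (Finsupp.single (n, m) r) =
      (r * ((μ - 2 * n) + (μ - 2 * m))) • Finsupp.single (n, m) 1 := by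
  rw [Hhat, opOf_single, smul_smul]

lemma Fhat_single (μ : ℂ) (n m : ℕ) (r : ℂ) :
    Fhat μ (Finsupp.single (n, m) r) =
      r • Finsupp.single (n + 1, m) 1 +
        (r * (((m : ℂ) + 1) * (μ - m))) • Finsupp.single (n, m + 1) 1 := by
  rw [Fhat, opOf_single]
  simp only [smul_add, smul_smul]

variable (μ : ℂ)

lemma EH (x : TMod) :
    Ehat μ (Hhat μ x) = Hhat μ (Ehat μ x) - (2:ℂ) • Ehat μ x := by
  have h : (Ehat μ).comp (Hhat μ) = (Hhat μ).comp (Ehat μ) - (2:ℂ) • Ehat μ := by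
    apply Finsupp.lhom_ext
    rintro ⟨n, m⟩ r
    rcases m with _ | m <;> rcases n with _ | n <;>
      simp only [LinearMap.comp_apply, LinearMap.sub_apply, LinearMap.smul_apply,
        Ehat_single, Hhat_single, map_add, map_smul, if_true, if_false, Nat.succ_ne_zero,
        Nat.succ_sub_one, eq_self_iff_true, add_zero, map_zero, smul_add, smul_smul,
        smul_zero] <;>
      push_cast <;> module
  exact LinearMap.congr_fun h x

lemma FH (x : TMod) :
    Fhat μ (Hhat μ x) = Hhat μ (Fhat μ x) + (2:ℂ) • Fhat μ x := by
  have h : (Fhat μ).comp (Hhat μ) = (Hhat μ).comp (Fhat μ) + (2:ℂ) • Fhat μ := by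
    apply Finsupp.lhom_ext
    rintro ⟨n, m⟩ r
    simp only [LinearMap.comp_apply, LinearMap.add_apply, LinearMap.smul_apply,
      Fhat_single, Hhat_single, map_add, map_smul, smul_add, smul_smul]
    push_cast; module
  exact LinearMap.congr_fun h x

lemma EF (x : TMod) :
    Ehat μ (Fhat μ x) = Fhat μ (Ehat μ x) + Hhat μ x := by
  have h : (Ehat μ).comp (Fhat μ) = (Fhat μ).comp (Ehat μ) + Hhat μ := by
    apply Finsupp.lhom_ext
    rintro ⟨n, m⟩ r
    rcases m with _ | m <;> rcases n with _ | n <;>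
      simp only [LinearMap.comp_apply, LinearMap.add_apply, Ehat_single, Fhat_single,
        Hhat_single, map_add, map_smul, if_true, if_false, Nat.succ_ne_zero,
        Nat.succ_sub_one, Nat.add_sub_cancel, eq_self_iff_true, add_zero, map_zero,
        smul_add, smul_smul, smul_zero, zero_add] <;>
      push_cast <;> module
  exact LinearMap.congr_fun h x

/-- inverse of (Hhat + c) -/
def Gop (c : ℂ) : Module.End ℂ TMod :=
  opOf fun p => (((μ - 2 * (p.1 : ℂ)) + (μ - 2 * (p.2 : ℂ)) + c)⁻¹) • Finsupp.single p 1

lemma HG (c : ℂ) (hc : ∀ n m : ℕ, ((μ - 2 * (n : ℂ)) + (μ - 2 * (m : ℂ)) + c) ≠ 0) (x : TMod) : Hhat μ (Gop μ c x) + c • Gop μ c x = x := by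
  have h : (Hhat μ).comp (Gop μ c) + c • Gop μ c = LinearMap.id := by
    apply Finsupp.lhom_ext
    rintro ⟨n, m⟩ r
    have hw := hc n m
    simp only [LinearMap.comp_apply, LinearMap.add_apply, LinearMap.smul_apply,
      Gop, opOf_single, Hhat_single, map_smul, smul_smul, LinearMap.id_apply]
    simp only [Finsupp.smul_single, smul_eq_mul, mul_one, ← Finsupp.single_add]
    congr 1
    field_simp
  exact LinearMap.congr_fun h x

lemma GH (c : ℂ) (hc : ∀ n m : ℕ, ((μ - 2 * (n : ℂ)) + (μ - 2 * (m : ℂ)) + c) ≠ 0) (x : TMod) : Gop μ c (Hhat μ x + c • x) = x := by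
  have h : (Gop μ c).comp ((Hhat μ) + c • LinearMap.id) = LinearMap.id := by
    apply Finsupp.lhom_ext
    rintro ⟨n, m⟩ r
    have hw := hc n m
    simp only [LinearMap.comp_apply, LinearMap.add_apply, LinearMap.smul_apply,
      Gop, opOf_single, Hhat_single, map_smul, map_add, smul_smul, LinearMap.id_apply]
    simp only [Finsupp.smul_single, smul_eq_mul, mul_one, ← Finsupp.single_add]
    congr 1
    field_simp
  have := LinearMap.congr_fun h x
  simpa using this



lemma EG0 (h0 : ∀ n m : ℕ, ((μ - 2 * (n : ℂ)) + (μ - 2 * (m : ℂ)) + 0) ≠ 0)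
    (hm2 : ∀ n m : ℕ, ((μ - 2 * (n : ℂ)) + (μ - 2 * (m : ℂ)) + (-2)) ≠ 0) (y : TMod) :
    Ehat μ (Gop μ 0 y) = Gop μ (-2) (Ehat μ y) := by
  have hy : Hhat μ (Gop μ 0 y) = y := by simpa using HG μ 0 h0 y
  have h2' : Ehat μ y = Hhat μ (Ehat μ (Gop μ 0 y)) + (-2 : ℂ) • Ehat μ (Gop μ 0 y) := by
    conv_lhs => rw [← hy, EH]
    module
  rw [h2', GH μ (-2) hm2]

lemma FG0 (h0 : ∀ n m : ℕ, ((μ - 2 * (n : ℂ)) + (μ - 2 * (m : ℂ)) + 0) ≠ 0)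
    (h2 : ∀ n m : ℕ, ((μ - 2 * (n : ℂ)) + (μ - 2 * (m : ℂ)) + 2) ≠ 0) (y : TMod) :
    Fhat μ (Gop μ 0 y) = Gop μ 2 (Fhat μ y) := by
  have hy : Hhat μ (Gop μ 0 y) = y := by simpa using HG μ 0 h0 y
  have h2' : Fhat μ y = Hhat μ (Fhat μ (Gop μ 0 y)) + (2 : ℂ) • Fhat μ (Gop μ 0 y) := by
    conv_lhs => rw [← hy, FH]
  rw [h2', GH μ 2 h2]

lemma EG2 (h0 : ∀ n m : ℕ, ((μ - 2 * (n : ℂ)) + (μ - 2 * (m : ℂ)) + 0) ≠ 0)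
    (h2 : ∀ n m : ℕ, ((μ - 2 * (n : ℂ)) + (μ - 2 * (m : ℂ)) + 2) ≠ 0) (y : TMod) :
    Ehat μ (Gop μ 2 y) = Gop μ 0 (Ehat μ y) := by
  have hy : Hhat μ (Gop μ 2 y) + (2:ℂ) • Gop μ 2 y = y := HG μ 2 h2 y
  have h2' : Ehat μ y = Hhat μ (Ehat μ (Gop μ 2 y)) + (0 : ℂ) • Ehat μ (Gop μ 2 y) := by
    conv_lhs => rw [← hy]
    rw [map_add, map_smul, EH]
    module
  rw [h2', GH μ 0 h0]

lemma FGm2 (h0 : ∀ n m : ℕ, ((μ - 2 * (n : ℂ)) + (μ - 2 * (m : ℂ)) + 0) ≠ 0)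
    (hm2 : ∀ n m : ℕ, ((μ - 2 * (n : ℂ)) + (μ - 2 * (m : ℂ)) + (-2)) ≠ 0) (y : TMod) :
    Fhat μ (Gop μ (-2) y) = Gop μ 0 (Fhat μ y) := by
  have hy : Hhat μ (Gop μ (-2) y) + (-2:ℂ) • Gop μ (-2) y = y := HG μ (-2) hm2 y
  have h2' : Fhat μ y = Hhat μ (Fhat μ (Gop μ (-2) y)) + (0 : ℂ) • Fhat μ (Gop μ (-2) y) := by
    conv_lhs => rw [← hy]
    rw [map_add, map_smul, FH]
    module
  rw [h2', GH μ 0 h0]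


end Aux17

def p1 : TMod × TMod × TMod →ₗ[ℂ] TMod := LinearMap.fst ℂ TMod (TMod × TMod)
def p2 : TMod × TMod × TMod →ₗ[ℂ] TMod :=
  (LinearMap.fst ℂ TMod TMod).comp (LinearMap.snd ℂ TMod (TMod × TMod))
def p3 : TMod × TMod × TMod →ₗ[ℂ] TMod :=
  (LinearMap.snd ℂ TMod TMod).comp (LinearMap.snd ℂ TMod (TMod × TMod))

/-- the Chevalley–Eilenberg differential C⁰ → C¹, v ↦ (e·v, h·v, f·v) -/
def d0 (μ : ℂ) : TMod →ₗ[ℂ] TMod × TMod × TMod :=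
  LinearMap.prod (Ehat μ) (LinearMap.prod (Hhat μ) (Fhat μ))

/-- the Chevalley–Eilenberg differential C¹ → C², in the coordinates
ω ↦ (ω(e), ω(h), ω(f)), dω ↦ (dω(e,h), dω(e,f), dω(h,f)). -/
def d1 (μ : ℂ) : TMod × TMod × TMod →ₗ[ℂ] TMod × TMod × TMod :=
  LinearMap.prod ((Ehat μ).comp p2 - (Hhat μ).comp p1 + (2 : ℂ) • p1)
    (LinearMap.prod ((Ehat μ).comp p3 - (Fhat μ).comp p1 - p2)
      ((Hhat μ).comp p3 - (Fhat μ).comp p2 + (2 : ℂ) • p3))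

/-- the Chevalley–Eilenberg differential C² → C³ ≅ M,
(ω(e,h), ω(e,f), ω(h,f)) ↦ dω(e,h,f). -/
def d2 (μ : ℂ) : TMod × TMod × TMod →ₗ[ℂ] TMod :=
  (Ehat μ).comp p3 - (Hhat μ).comp p2 + (Fhat μ).comp p1

namespace Aux17

lemma d0_apply (μ : ℂ) (v : TMod) : d0 μ v = (Ehat μ v, Hhat μ v, Fhat μ v) := rfl

lemma d1_apply (μ : ℂ) (a b c : TMod) :
    d1 μ (a, b, c) =
      (Ehat μ b - Hhat μ a + (2:ℂ) • a, Ehat μ c - Fhat μ a - b,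
        Hhat μ c - Fhat μ b + (2:ℂ) • c) := rfl

lemma d2_apply (μ : ℂ) (a b c : TMod) :
    d2 μ (a, b, c) = Ehat μ c - Hhat μ b + Fhat μ a := rfl

end Aux17

open Aux17

/-- Hⁿ(sl₂; V_{-λ-2} ⊗ V*_{-λ-2}) = 0 for all n. -/
theorem statement17 (lam : ℕ) :
    LinearMap.ker (d0 (-(lam : ℂ) - 2)) = ⊥ ∧
    LinearMap.ker (d1 (-(lam : ℂ) - 2)) = LinearMap.range (d0 (-(lam : ℂ) - 2)) ∧
    LinearMap.ker (d2 (-(lam : ℂ) - 2)) = LinearMap.range (d1 (-(lam : ℂ) - 2)) ∧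
    LinearMap.range (d2 (-(lam : ℂ) - 2)) = ⊤ := by
  obtain ⟨μ, hμ⟩ : ∃ x : ℂ, x = -(lam : ℂ) - 2 := ⟨_, rfl⟩
  rw [← hμ]
  have key : ∀ (c : ℂ) (k : ℕ), c + k = 4 → k ≠ 0 →
      ∀ n m : ℕ, ((μ - 2 * (n : ℂ)) + (μ - 2 * (m : ℂ)) + c) ≠ 0 := by
    intro c k hck hk n m h
    rw [hμ] at h
    have h2 : ((2 * lam + 2 * n + 2 * m + k : ℕ) : ℂ) = 0 := by
      push_cast
      linear_combination -h + hck
    rw [Nat.cast_eq_zero] at h2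
    omega
  have h0 := key 0 4 (by norm_num) (by norm_num)
  have hp2 := key 2 2 (by norm_num) (by norm_num)
  have hm2 := key (-2) 6 (by norm_num) (by norm_num)
  have HG0 : ∀ x : TMod, Hhat μ (Gop μ 0 x) = x := fun x => by simpa using HG μ 0 h0 x
  have GH0 : ∀ x : TMod, Gop μ 0 (Hhat μ x) = x := fun x => by simpa using GH μ 0 h0 x
  refine ⟨?_, ?_, ?_, ?_⟩
  · rw [LinearMap.ker_eq_bot']
    intro v hv
    simp only [d0_apply, Prod.ext_iff, Prod.fst_zero, Prod.snd_zero] at hv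
    obtain ⟨-, hH, -⟩ := hv
    have := GH0 v
    rw [hH, map_zero] at this
    exact this.symm
  · apply le_antisymm
    · rintro ⟨a, b, c⟩ hx
      simp only [LinearMap.mem_ker, d1_apply, Prod.ext_iff, Prod.fst_zero,
        Prod.snd_zero] at hx
      obtain ⟨h1, h2, h3⟩ := hx
      refine LinearMap.mem_range.mpr ⟨Gop μ 0 b, ?_⟩
      rw [d0_apply, Prod.mk.injEq, Prod.mk.injEq]
      refine ⟨?_, HG0 b, ?_⟩
      · have hEb : Ehat μ b = Hhat μ a + (-2:ℂ) • a := by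
          linear_combination (norm := module) h1
        rw [EG0 μ h0 hm2, hEb, GH μ (-2) hm2]
      · have hFb : Fhat μ b = Hhat μ c + (2:ℂ) • c := by
          linear_combination (norm := module) -h3
        rw [FG0 μ h0 hp2, hFb, GH μ 2 hp2]
    · rw [LinearMap.range_le_ker_iff]
      apply LinearMap.ext
      intro v
      simp only [LinearMap.comp_apply, LinearMap.zero_apply, d0_apply, d1_apply,
        Prod.ext_iff, Prod.fst_zero, Prod.snd_zero]
      refine ⟨?_, ?_, ?_⟩
      · linear_combination (norm := module) EH μ v
      · linear_combination (norm := module) EF μ v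
      · linear_combination (norm := module) -FH μ v
  · apply le_antisymm
    · rintro ⟨a, b, c⟩ hx
      rw [LinearMap.mem_ker, d2_apply] at hx
      refine LinearMap.mem_range.mpr ⟨(-(Gop μ (-2) a), 0, Gop μ 2 c), ?_⟩
      rw [d1_apply, Prod.mk.injEq, Prod.mk.injEq]
      refine ⟨?_, ?_, ?_⟩
      · rw [map_zero, map_neg]
        have := HG μ (-2) hm2 a
        linear_combination (norm := module) this
      · have hEc : Ehat μ c + Fhat μ a = Hhat μ b := by
          linear_combination (norm := module) hx
        rw [map_neg, EG2 μ h0 hp2, FGm2 μ h0 hm2, sub_zero, sub_neg_eq_add,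
          ← map_add, hEc, GH0 b]
      · rw [map_zero]
        have := HG μ 2 hp2 c
        linear_combination (norm := module) this
    · rw [LinearMap.range_le_ker_iff]
      apply LinearMap.ext
      rintro ⟨a, b, c⟩
      simp only [LinearMap.comp_apply, LinearMap.zero_apply, d1_apply, d2_apply,
        map_add, map_sub, map_smul]
      linear_combination (norm := module) EH μ c - EF μ b - FH μ a
  · rw [LinearMap.range_eq_top]
    intro v
    refine ⟨(0, -(Gop μ 0 v), 0), ?_⟩
    rw [d2_apply, map_zero, map_zero, map_neg, HG0]
    module

end
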